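/- There exists an injection from the set {0, 1, ..., 2^n} (of cardinality 2^n + 1) into the powerset of {0, 1, ..., n} (of cardinality 2^{n+1}); using any such injection e, the n+1 upsets U_k = upward closure of {x^l_0 : k ∈ e(l)} in E_n assign pairwise distinct 0-types to the 2^n + 1 top elements x^0_0, ..., x^{2^n}_0. -/
import Mathlib


/-- The carrier of the Esakia-type poset `E_n`: points `x^l_i` with
`l ≤ 2^n`, `i < ω`, together with a bottom point `x_∞` (encoded as `none`). -/
def EnC (n : ℕ) : Type := Option {p : ℕ × ℕ // p.1 ≤ 2 ^ n}

/-- The point `x^l_i` of `E_n`. -/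
def EnPt (n : ℕ) (l i : ℕ) (h : l ≤ 2 ^ n) : EnC n := some ⟨(l, i), h⟩

/-- The bottom point `x_∞` of `E_n`. -/
def EnInf (n : ℕ) : EnC n := none

/-- The order of `E_n`: `x_∞` is below everything; `x^l_{i+1} ≤ x^{l'}_i`
iff `l' ≠ l + 1`; every element of level `i + t` (`t ≥ 2`) is below every
element of level `i`. -/
def EnLe {n : ℕ} : EnC n → EnC n → Prop
  | none, _ => True
  | some _, none => False
  | some p, some q =>
      p.1 = q.1 ∨ (p.1.2 = q.1.2 + 1 ∧ q.1.1 ≠ p.1.1 + 1) ∨ q.1.2 + 2 ≤ p.1.2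

instance (n : ℕ) : PartialOrder (EnC n) where
  le := EnLe
  le_refl a := by cases a with
    | none => trivial
    | some p => exact Or.inl rfl
  le_trans a b c hab hbc := by
    cases a with
    | none => trivial
    | some p =>
      cases b with
      | none => simp only [EnLe] at hab
      | some q =>
        cases c with
        | none => simp only [EnLe] at hbc
        | some r =>
          simp only [EnLe] at *
          rcases hab with h1 | h1 | h1 <;> rcases hbc with h2 | h2 | h2
          · exact Or.inl (h1.trans h2)
          · rw [h1]; exact Or.inr (Or.inl h2)
          · rw [h1]; exact Or.inr (Or.inr h2)
          · rw [← h2]; exact Or.inr (Or.inl h1)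
          · exact Or.inr (Or.inr (by omega))
          · exact Or.inr (Or.inr (by omega))
          · rw [← h2]; exact Or.inr (Or.inr h1)
          · exact Or.inr (Or.inr (by omega))
          · exact Or.inr (Or.inr (by omega))
  le_antisymm a b hab hba := by
    cases a with
    | none => cases b with
      | none => rfl
      | some q => simp only [EnLe] at hba
    | some p =>
      cases b with
      | none => simp only [EnLe] at hab
      | some q =>
        simp only [EnLe] at hab hba
        congr 1
        exact Subtype.ext (by rcases hab with h | h | h <;> rcases hba with h' | h' | h' <;>
          first | exact h | exact h'.symm | omega)

/-- The `j`-th level of `E_n`. -/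
def EnLevel (n j : ℕ) : Set (EnC n) := {p | ∃ (l : ℕ) (h : l ≤ 2 ^ n), p = EnPt n l j h}

/-- The bisimulation-style relations `∼^G_m` over a family `G` of subsets. -/
def simRel {α : Type*} [Preorder α] (G : Set (Set α)) : ℕ → α → α → Prop
  | 0 => fun x y => ∀ g ∈ G, (x ∈ g ↔ y ∈ g)
  | m + 1 => fun x y =>
      (∀ z, x ≤ z → ∃ w, y ≤ w ∧ simRel G m z w) ∧
      (∀ w, y ≤ w → ∃ z, x ≤ z ∧ simRel G m z w)

/-- `x ∼^G_ω y`. -/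
def simOmega {α : Type*} [Preorder α] (G : Set (Set α)) (x y : α) : Prop :=
  ∀ m, simRel G m x y

/-- The upward closure of a subset of `E_n`. -/
def upClosure {n : ℕ} (S : Set (EnC n)) : Set (EnC n) := {p | ∃ q ∈ S, q ≤ p}

/-- The upset `U_k` determined by an injection `e` of the top level into the
powerset of `{0, …, n}`: the upward closure of `{x^l_0 : k ∈ e(l)}`. -/
def topColour (n : ℕ) (e : Fin (2 ^ n + 1) → Set (Fin (n + 1)))
    (k : Fin (n + 1)) : Set (EnC n) :=
  upClosure {p | ∃ l : Fin (2 ^ n + 1), k ∈ e l ∧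
    p = EnPt n l 0 (Nat.lt_succ_iff.mp l.isLt)}

lemma mem_topColour (n : ℕ) (e : Fin (2 ^ n + 1) → Set (Fin (n + 1)))
    (k : Fin (n + 1)) (l : Fin (2 ^ n + 1)) :
    EnPt n l 0 (Nat.lt_succ_iff.mp l.isLt) ∈ topColour n e k ↔ k ∈ e l := by
  constructor
  · rintro ⟨q, ⟨l', hk, rfl⟩, hle⟩
    change EnLe _ _ at hle
    simp only [EnPt, EnLe] at hle
    have : l' = l := by
      apply Fin.ext
      rcases hle with h | h | h
      · exact congrArg Prod.fst h
      · omega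
      · omega
    rwa [this] at hk
  · intro hk
    exact ⟨_, ⟨l, hk, rfl⟩, le_refl _⟩

/-- There is an injection from `{0, …, 2^n}` into the powerset of
`{0, …, n}`, and for any such injection `e` the `n+1` upsets `U_k`
assign pairwise distinct `0`-types to the `2^n + 1` top elements. -/
theorem top_level_distinct_zero_types (n : ℕ) :
    (∃ e : Fin (2 ^ n + 1) → Set (Fin (n + 1)), Function.Injective e) ∧
    (∀ e : Fin (2 ^ n + 1) → Set (Fin (n + 1)), Function.Injective e →
      (∀ k, IsUpperSet (topColour n e k)) ∧
      ∀ l l' : Fin (2 ^ n + 1), l ≠ l' →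
        ∃ k : Fin (n + 1),
          ¬ (EnPt n l 0 (Nat.lt_succ_iff.mp l.isLt) ∈ topColour n e k ↔
             EnPt n l' 0 (Nat.lt_succ_iff.mp l'.isLt) ∈ topColour n e k)) := by
  constructor
  · have h : Fintype.card (Fin (2 ^ n + 1)) ≤ Fintype.card (Set (Fin (n + 1))) := by
      simp only [Fintype.card_fin, Fintype.card_set]
      have h1 : 1 ≤ 2 ^ n := Nat.one_le_two_pow
      calc 2 ^ n + 1 ≤ 2 ^ n + 2 ^ n := by omega
        _ = 2 ^ (n + 1) := by ring
    obtain ⟨f⟩ := Function.Embedding.nonempty_of_card_le h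
    exact ⟨f, f.injective⟩
  · intro e he
    refine ⟨fun k p q hpq hp => ?_, fun l l' hll => ?_⟩
    · obtain ⟨r, hr, hrp⟩ := hp
      exact ⟨r, hr, hrp.trans hpq⟩
    · have : e l ≠ e l' := fun h => hll (he h)
      obtain ⟨k, hk⟩ : ∃ k, ¬ (k ∈ e l ↔ k ∈ e l') := by
        by_contra h
        push_neg at h
        exact this (Set.ext fun k => h k)
      exact ⟨k, by rw [mem_topColour, mem_topColour]; exact hk⟩
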